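/- arXiv:1009.2803 — 11 statements merged into one kernel-verified Lean document; each statement's English description precedes it below -/
import Mathlib

section
/- For a Boolean algebra A with Stone space X, the image of the map a ↦ â = {μ : a ∈ μ} is join-of-meet dense and meet-of-join dense in P(X): every subset of X is both an intersection of unions and a union of intersections of sets of the form â. -/
/-
Ultrafilters are maximal, so the ultrafilter `μ` is the only point of `⋂ a ∈ μ, â`: singletons are
meets of basic sets. Since `(aᶜ)^` is the complement of `â`, the complement of the singleton `{ν}`
is the join `⋃ a ∈ ν, (aᶜ)^`. Every subset `U` of the Stone space is the union of its singletons and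
the intersection of the complements of the singletons of `Uᶜ`.
-/

def IsUltrafilterBA {A : Type*} [BooleanAlgebra A] (μ : Set A) : Prop :=
  (⊤ ∈ μ) ∧ (⊥ ∉ μ) ∧
  (∀ a b : A, a ∈ μ → a ≤ b → b ∈ μ) ∧
  (∀ a b : A, a ∈ μ → b ∈ μ → a ⊓ b ∈ μ) ∧
  (∀ a : A, a ∈ μ ∨ aᶜ ∈ μ)

def stoneHat {A : Type*} [BooleanAlgebra A] (a : A) :
    Set {μ : Set A // IsUltrafilterBA μ} := {μ | a ∈ μ.1}

namespace IsUltrafilterBA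

variable {A : Type*} [BooleanAlgebra A] {μ ν : Set A}

theorem compl_mem_iff (hμ : IsUltrafilterBA μ) {a : A} : aᶜ ∈ μ ↔ a ∉ μ := by
  refine ⟨fun hc ha => hμ.2.1 ?_, (hμ.2.2.2.2 a).resolve_left⟩
  simpa only [inf_compl_eq_bot] using hμ.2.2.2.1 a aᶜ ha hc

theorem eq_of_subset (hμ : IsUltrafilterBA μ) (hν : IsUltrafilterBA ν) (h : μ ⊆ ν) : μ = ν := by
  refine h.antisymm fun a ha => ?_
  by_contra haμ
  exact hν.compl_mem_iff.mp (h (hμ.compl_mem_iff.mpr haμ)) ha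

end IsUltrafilterBA

section StoneSpace

variable {A : Type*} [BooleanAlgebra A]

theorem stoneHat_compl (a : A) : stoneHat aᶜ = (stoneHat a)ᶜ :=
  Set.ext fun μ => μ.2.compl_mem_iff

theorem iInter_stoneHat_eq_singleton (μ : {μ : Set A // IsUltrafilterBA μ}) :
    ⋂ a ∈ μ.1, stoneHat a = {μ} := by
  ext ν
  simp only [Set.mem_iInter, Set.mem_singleton_iff]
  refine ⟨fun h => ?_, fun h a ha => h ▸ ha⟩
  exact (Subtype.ext (μ.2.eq_of_subset ν.2 h)).symm

theorem iUnion_stoneHat_compl_eq_compl_singleton (μ : {μ : Set A // IsUltrafilterBA μ}) :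
    ⋃ a ∈ μ.1, stoneHat aᶜ = {μ}ᶜ := by
  simp only [stoneHat_compl, ← Set.compl_iInter₂, iInter_stoneHat_eq_singleton]

end StoneSpace

/-- The image of the Stone map is join-of-meet dense and meet-of-join dense in
the powerset of the Stone space: every set of ultrafilters is a union of
intersections, and an intersection of unions, of sets of the form `â`. -/
theorem stmt_1 {A : Type*} [BooleanAlgebra A] :
    ∀ U : Set {μ : Set A // IsUltrafilterBA μ},
      (∃ 𝒮 : Set (Set A), U = ⋃ S ∈ 𝒮, ⋂ a ∈ S, stoneHat a) ∧
      (∃ 𝒯 : Set (Set A), U = ⋂ S ∈ 𝒯, ⋃ a ∈ S, stoneHat a) := by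
  intro U
  refine ⟨⟨Subtype.val '' U, ?_⟩, ⟨(fun ν => compl '' ν.1) '' Uᶜ, ?_⟩⟩
  · simp only [Set.biUnion_image, iInter_stoneHat_eq_singleton, Set.biUnion_of_singleton]
  · simp only [Set.biInter_image, Set.biUnion_image, iUnion_stoneHat_compl_eq_compl_singleton,
      ← Set.compl_iUnion₂, Set.biUnion_of_singleton, compl_compl]
end

section
/- For a lattice embedding e : L → L' of a bounded lattice L into a complete lattice L', the compactness property (for all S, T ⊆ L with ⋀e(S) ≤ ⋁e(T) there are finite S' ⊆ S, T' ⊆ T with ⋀S' ≤ ⋁T' in L) is equivalent to the condition: for every filter F and ideal I of L with ⋀e(F) ≤ ⋁e(I), F ∩ I ≠ ∅. -/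
/-- A (lattice) filter: a nonempty, upward-closed subset closed under binary meet. -/
def IsLatFilter {L : Type*} [Lattice L] (F : Set L) : Prop :=
  F.Nonempty ∧ (∀ a b : L, a ∈ F → a ≤ b → b ∈ F) ∧
  (∀ a b : L, a ∈ F → b ∈ F → a ⊓ b ∈ F)

/-- A (lattice) ideal: a nonempty, downward-closed subset closed under binary join. -/
def IsLatIdeal {L : Type*} [Lattice L] (I : Set L) : Prop :=
  I.Nonempty ∧ (∀ a b : L, a ∈ I → b ≤ a → b ∈ I) ∧
  (∀ a b : L, a ∈ I → b ∈ I → a ⊔ b ∈ I)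

/-!
Finite witnesses `S' ⊆ F`, `T' ⊆ I` with `⋀ S' ≤ ⋁ T'` put `⋀ S'` into `F ∩ I`. Conversely, the
filter generated by `S` and the ideal generated by `T` contain `S` and `T`, so `⋀ e(S) ≤ ⋁ e(T)`
passes to them, and a common element `a` is exactly a pair of finite witnesses `⋀ S' ≤ a ≤ ⋁ T'`.
-/

section LatticeSpans

variable {L : Type*} [Lattice L]

theorem IsLatFilter.finset_inf_mem [OrderTop L] {F : Set L} (hF : IsLatFilter F)
    {S : Finset L} (hS : ↑S ⊆ F) : S.inf id ∈ F := by
  obtain ⟨x, hx⟩ := hF.1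
  exact Finset.inf_induction (hF.2.1 x ⊤ hx le_top) (fun a ha b hb => hF.2.2 a b ha hb)
    fun b hb => hS hb

theorem IsLatIdeal.finset_sup_mem [OrderBot L] {I : Set L} (hI : IsLatIdeal I)
    {T : Finset L} (hT : ↑T ⊆ I) : T.sup id ∈ I := by
  obtain ⟨x, hx⟩ := hI.1
  exact Finset.sup_induction (hI.2.1 x ⊥ hx bot_le) (fun a ha b hb => hI.2.2 a b ha hb)
    fun b hb => hT hb

def latFilterSpan [OrderTop L] (S : Set L) : Set L :=
  {a | ∃ S' : Finset L, ↑S' ⊆ S ∧ S'.inf id ≤ a}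

def latIdealSpan [OrderBot L] (T : Set L) : Set L :=
  {a | ∃ T' : Finset L, ↑T' ⊆ T ∧ a ≤ T'.sup id}

theorem subset_latFilterSpan [OrderTop L] (S : Set L) : S ⊆ latFilterSpan S :=
  fun a ha => ⟨{a}, by simpa using ha, by simp⟩

theorem subset_latIdealSpan [OrderBot L] (T : Set L) : T ⊆ latIdealSpan T :=
  fun a ha => ⟨{a}, by simpa using ha, by simp⟩

theorem isLatFilter_latFilterSpan [OrderTop L] (S : Set L) : IsLatFilter (latFilterSpan S) := by
  classical
  refine ⟨⟨⊤, ∅, by simp⟩, ?_, ?_⟩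
  · rintro a b ⟨S', hS', hle⟩ hab
    exact ⟨S', hS', hle.trans hab⟩
  · rintro a b ⟨Sa, hSa, ha⟩ ⟨Sb, hSb, hb⟩
    refine ⟨Sa ∪ Sb, by simp [hSa, hSb], le_inf ?_ ?_⟩
    · exact (Finset.inf_mono Finset.subset_union_left).trans ha
    · exact (Finset.inf_mono Finset.subset_union_right).trans hb

theorem isLatIdeal_latIdealSpan [OrderBot L] (T : Set L) : IsLatIdeal (latIdealSpan T) := by
  classical
  refine ⟨⟨⊥, ∅, by simp⟩, ?_, ?_⟩
  · rintro a b ⟨T', hT', hle⟩ hba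
    exact ⟨T', hT', hba.trans hle⟩
  · rintro a b ⟨Ta, hTa, ha⟩ ⟨Tb, hTb, hb⟩
    refine ⟨Ta ∪ Tb, by simp [hTa, hTb], sup_le ?_ ?_⟩
    · exact ha.trans (Finset.sup_mono Finset.subset_union_left)
    · exact hb.trans (Finset.sup_mono Finset.subset_union_right)

theorem exists_finset_inf_le_sup_of_inter_span_nonempty [BoundedOrder L] {S T : Set L}
    (h : (latFilterSpan S ∩ latIdealSpan T).Nonempty) :
    ∃ S' T' : Finset L, ↑S' ⊆ S ∧ ↑T' ⊆ T ∧ S'.inf id ≤ T'.sup id := by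
  obtain ⟨a, ⟨S', hS', hS'a⟩, ⟨T', hT', haT'⟩⟩ := h
  exact ⟨S', T', hS', hT', hS'a.trans haT'⟩

theorem inter_nonempty_of_finset_inf_le_sup [BoundedOrder L] {F I : Set L}
    (hF : IsLatFilter F) (hI : IsLatIdeal I) {S' T' : Finset L} (hS' : ↑S' ⊆ F)
    (hT' : ↑T' ⊆ I) (hle : S'.inf id ≤ T'.sup id) : (F ∩ I).Nonempty :=
  ⟨S'.inf id, hF.finset_inf_mem hS', hI.2.1 _ _ (hI.finset_sup_mem hT') hle⟩

end LatticeSpans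

theorem stmt_3_general {L L' : Type*} [Lattice L] [BoundedOrder L] [CompleteLattice L']
    (e : L → L') :
    (∀ S T : Set L, sInf (e '' S) ≤ sSup (e '' T) →
        ∃ S' T' : Finset L, ↑S' ⊆ S ∧ ↑T' ⊆ T ∧ S'.inf id ≤ T'.sup id) ↔
    (∀ F I : Set L, IsLatFilter F → IsLatIdeal I →
        sInf (e '' F) ≤ sSup (e '' I) → (F ∩ I).Nonempty) := by
  constructor
  · intro hcompact F I hF hI hle
    obtain ⟨S', T', hS', hT', hST⟩ := hcompact F I hle
    exact inter_nonempty_of_finset_inf_le_sup hF hI hS' hT' hST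
  · intro hsep S T hle
    have hspan : sInf (e '' latFilterSpan S) ≤ sSup (e '' latIdealSpan T) :=
      (sInf_le_sInf (Set.image_mono (subset_latFilterSpan S))).trans
        (hle.trans (sSup_le_sSup (Set.image_mono (subset_latIdealSpan T))))
    exact exists_finset_inf_le_sup_of_inter_span_nonempty
      (hsep _ _ (isLatFilter_latFilterSpan S) (isLatIdeal_latIdealSpan T) hspan)

/-- For a lattice embedding `e : L → L'` of a bounded lattice into a complete
lattice, the compactness property is equivalent to the filter/ideal
formulation. -/
theorem stmt_3 {L L' : Type*} [Lattice L] [BoundedOrder L] [CompleteLattice L']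
    (e : L → L') (hinj : Function.Injective e)
    (hinf : ∀ a b : L, e (a ⊓ b) = e a ⊓ e b)
    (hsup : ∀ a b : L, e (a ⊔ b) = e a ⊔ e b)
    (hbot : e ⊥ = ⊥) (htop : e ⊤ = ⊤) :
    (∀ S T : Set L, sInf (e '' S) ≤ sSup (e '' T) →
        ∃ S' T' : Finset L, ↑S' ⊆ S ∧ ↑T' ⊆ T ∧ S'.inf id ≤ T'.sup id) ↔
    (∀ F I : Set L, IsLatFilter F → IsLatIdeal I →
        sInf (e '' F) ≤ sSup (e '' I) → (F ∩ I).Nonempty) :=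
  stmt_3_general e
end

section
/- If the identity map on a bounded lattice L is a canonical extension (i.e., L is complete, L is trivially dense in itself, and the compactness condition holds for the identity embedding), then L has no infinite chains. -/
/-!
Taking `S = {a}` in the compactness condition shows that every element `a` is compact, so `L`
satisfies the ascending chain condition; the condition is self-dual, so `L` also satisfies the
descending chain condition, and a chain in an order with both chain conditions is finite.
-/

def CanonicalCompactness (L : Type*) [CompleteLattice L] : Prop :=
  ∀ S T : Set L, sInf S ≤ sSup T →
    ∃ S' T' : Finset L, ↑S' ⊆ S ∧ ↑T' ⊆ T ∧ S'.inf id ≤ T'.sup id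

theorem IsChain.finite_of_wellFoundedLT_of_wellFoundedGT {α : Type*} [PartialOrder α]
    [WellFoundedLT α] [WellFoundedGT α] {c : Set α} (hc : IsChain (· ≤ ·) c) : c.Finite := by
  classical
  let := hc.linearOrder
  exact Set.finite_coe_iff.mp (Finite.of_wellFoundedLT_wellFoundedGT c)

namespace CanonicalCompactness

variable {L : Type*} [CompleteLattice L]

theorem dual (h : CanonicalCompactness L) : CanonicalCompactness Lᵒᵈ := by
  intro S T hST
  obtain ⟨T', S', hT', hS', hle⟩ := h T S hST
  exact ⟨S', T', hS', hT', hle⟩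

theorem isCompactElement (h : CanonicalCompactness L) (a : L) : IsCompactElement a := by
  refine (CompleteLattice.isCompactElement_iff_exists_le_sSup_of_le_sSup L a).mpr fun T haT => ?_
  obtain ⟨S', T', hS', hT', hle⟩ := h {a} T (by simpa using haT)
  refine ⟨T', hT', le_trans ?_ hle⟩
  exact Finset.le_inf fun b hb => by simp [Set.mem_singleton_iff.mp (hS' hb)]

theorem wellFoundedGT (h : CanonicalCompactness L) : WellFoundedGT L :=
  ((CompleteLattice.wellFoundedGT_characterisations L).out 0 3).mpr h.isCompactElement

theorem wellFoundedLT (h : CanonicalCompactness L) : WellFoundedLT L :=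
  h.dual.wellFoundedGT

end CanonicalCompactness

/-- If the identity map on a complete (bounded) lattice `L` satisfies the
compactness condition of canonical extensions, then `L` has no infinite
chains. -/
theorem stmt_4 {L : Type*} [CompleteLattice L]
    (hcompact : ∀ S T : Set L, sInf S ≤ sSup T →
      ∃ S' T' : Finset L, ↑S' ⊆ S ∧ ↑T' ⊆ T ∧ S'.inf id ≤ T'.sup id) :
    ∀ c : Set L, IsChain (· ≤ ·) c → c.Finite := by
  have h : CanonicalCompactness L := hcompact
  have := h.wellFoundedLT
  have := h.wellFoundedGT
  exact fun c hc => hc.finite_of_wellFoundedLT_of_wellFoundedGT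
end

section
/- Let e : L → C be a canonical extension of a bounded lattice L. Then the poset of filter elements F(C) = {x ∈ C : x is a meet of elements of e(L)} is order-anti-isomorphic to the poset of lattice filters of L, via x ↦ {a ∈ L : x ≤ e(a)} with inverse F ↦ ⋀e(F). -/
/-!
A filter element `x = ⋀ e(S)` is recovered as the meet of all `e a` above it, and for
`y` a filter element, `x ≤ y` is decided by the generators of `y`, so `x ↦ {a | x ≤ e a}`
is an order embedding, contravariantly. Compactness, applied with a single element on the
right, turns `⋀ e(F) ≤ e a` into `⋀ S' ≤ a` for a finite `S' ⊆ F`; when `F` is a filter this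
puts `a` back in `F`, which is the surjectivity.
-/

/-- `e : L → C` is a canonical extension of the bounded lattice `L`:
a dense and compact lattice completion. -/
def IsCanonExt {L C : Type*} [Lattice L] [BoundedOrder L] [CompleteLattice C]
    (e : L → C) : Prop :=
  Function.Injective e ∧
  (∀ a b : L, e (a ⊓ b) = e a ⊓ e b) ∧
  (∀ a b : L, e (a ⊔ b) = e a ⊔ e b) ∧
  e ⊥ = ⊥ ∧ e ⊤ = ⊤ ∧
  (∀ c : C, ∃ 𝒮 : Set (Set L), c = ⨆ S ∈ 𝒮, sInf (e '' S)) ∧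
  (∀ c : C, ∃ 𝒮 : Set (Set L), c = ⨅ S ∈ 𝒮, sSup (e '' S)) ∧
  (∀ S T : Set L, sInf (e '' S) ≤ sSup (e '' T) →
    ∃ S' T' : Finset L, ↑S' ⊆ S ∧ ↑T' ⊆ T ∧ S'.inf id ≤ T'.sup id)

/-- A filter element of the canonical extension: a meet of elements of `e(L)`. -/
def FilterElt {L C : Type*} [Lattice L] [BoundedOrder L] [CompleteLattice C]
    (e : L → C) (x : C) : Prop :=
  ∃ S : Set L, x = sInf (e '' S)

/-- An ideal element of the canonical extension: a join of elements of `e(L)`. -/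
def IdealElt {L C : Type*} [Lattice L] [BoundedOrder L] [CompleteLattice C]
    (e : L → C) (y : C) : Prop :=
  ∃ S : Set L, y = sSup (e '' S)

namespace IsLatFilter

variable {L : Type*} [Lattice L] [OrderTop L] {F : Set L}

theorem top_mem (hF : IsLatFilter F) : ⊤ ∈ F :=
  let ⟨a, ha⟩ := hF.1
  hF.2.1 a ⊤ ha le_top

theorem finset_inf_mem_s6 (hF : IsLatFilter F) {s : Finset L} (hs : ↑s ⊆ F) : s.inf id ∈ F :=
  Finset.inf_mem F hF.top_mem (fun a ha b hb => hF.2.2 a b ha hb) s id hs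

end IsLatFilter

namespace IsCanonExt

variable {L C : Type*} [Lattice L] [BoundedOrder L] [CompleteLattice C] {e : L → C}

theorem monotone (he : IsCanonExt e) : Monotone e := fun a b hab =>
  calc e a = e (a ⊓ b) := by rw [inf_eq_left.mpr hab]
    _ = e a ⊓ e b := he.2.1 a b
    _ ≤ e b := inf_le_right

theorem exists_finset_inf_le (he : IsCanonExt e) {S : Set L} {a : L}
    (h : sInf (e '' S) ≤ e a) : ∃ S' : Finset L, ↑S' ⊆ S ∧ S'.inf id ≤ a := by
  obtain ⟨S', T', hS', hT', hle⟩ := he.2.2.2.2.2.2.2 S {a} (by simpa using h)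
  refine ⟨S', hS', hle.trans (Finset.sup_le fun b hb => ?_)⟩
  rw [Set.mem_singleton_iff.mp (hT' hb), id]

theorem isLatFilter_setOf_le (he : IsCanonExt e) (x : C) : IsLatFilter {a | x ≤ e a} := by
  refine ⟨⟨⊤, ?_⟩, fun a b ha hab => ha.trans (he.monotone hab), fun a b ha hb => ?_⟩
  · simp only [Set.mem_ofPred_eq, he.2.2.2.2.1, le_top]
  · simpa only [Set.mem_ofPred_eq, he.2.1 a b] using le_inf ha hb

theorem setOf_sInf_image_le (he : IsCanonExt e) {F : Set L} (hF : IsLatFilter F) :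
    {a | sInf (e '' F) ≤ e a} = F := by
  ext a
  refine ⟨fun h => ?_, fun ha => sInf_le (Set.mem_image_of_mem e ha)⟩
  obtain ⟨S', hS', hle⟩ := he.exists_finset_inf_le h
  exact hF.2.1 _ a (hF.finset_inf_mem_s6 hS') hle

end IsCanonExt

namespace FilterElt

variable {L C : Type*} [Lattice L] [BoundedOrder L] [CompleteLattice C] {e : L → C} {x y : C}

theorem sInf_image_setOf_le (hx : FilterElt e x) : sInf (e '' {a | x ≤ e a}) = x := by
  obtain ⟨S, rfl⟩ := hx
  refine le_antisymm (sInf_le_sInf (Set.image_mono fun s hs => ?_)) (le_sInf ?_)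
  · exact sInf_le (Set.mem_image_of_mem e hs)
  · rintro _ ⟨a, ha, rfl⟩
    exact ha

theorem le_iff_setOf_le_subset (hy : FilterElt e y) :
    x ≤ y ↔ {a | y ≤ e a} ⊆ {a | x ≤ e a} := by
  obtain ⟨T, rfl⟩ := hy
  refine ⟨fun hxy a hya => hxy.trans hya, fun hsub => le_sInf ?_⟩
  rintro _ ⟨a, ha, rfl⟩
  exact hsub (sInf_le (Set.mem_image_of_mem e ha))

end FilterElt

/-- The filter elements of a canonical extension form a poset anti-isomorphic
to the poset of lattice filters of `L`, via `x ↦ {a : x ≤ e a}` with inverse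
`F ↦ ⋀ e(F)`. -/
theorem stmt_6 {L C : Type*} [Lattice L] [BoundedOrder L] [CompleteLattice C]
    (e : L → C) (he : IsCanonExt e) :
    (∀ x : C, FilterElt e x → IsLatFilter {a : L | x ≤ e a}) ∧
    (∀ F : Set L, IsLatFilter F → FilterElt e (sInf (e '' F))) ∧
    (∀ x : C, FilterElt e x → sInf (e '' {a : L | x ≤ e a}) = x) ∧
    (∀ F : Set L, IsLatFilter F → {a : L | sInf (e '' F) ≤ e a} = F) ∧
    (∀ x y : C, FilterElt e x → FilterElt e y →
      (x ≤ y ↔ {a : L | y ≤ e a} ⊆ {a : L | x ≤ e a})) :=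
  ⟨fun x _ => he.isLatFilter_setOf_le x,
    fun F _ => ⟨F, rfl⟩,
    fun _ hx => hx.sInf_image_setOf_le,
    fun _ hF => he.setOf_sInf_image_le hF,
    fun _ _ _ hy => hy.le_iff_setOf_le_subset⟩
end

section
/- Let e : L → C be a canonical extension of a bounded lattice L, y an ideal element with ideal I_y, and x a filter element with filter F_x. Then y ≤ x in C if and only if for all a ∈ I_y and b ∈ F_x, a ≤ b in L. -/
theorem le_iff_of_injective_of_map_inf {α β : Type*} [SemilatticeInf α] [SemilatticeInf β]
    {f : α → β} (hf : Function.Injective f) (hinf : ∀ a b, f (a ⊓ b) = f a ⊓ f b) {a b : α} :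
    f a ≤ f b ↔ a ≤ b := by
  rw [← inf_eq_left, ← hinf, hf.eq_iff, inf_eq_left]

theorem IsCanonExt.le_iff {L C : Type*} [Lattice L] [BoundedOrder L] [CompleteLattice C]
    {e : L → C} (he : IsCanonExt e) {a b : L} : e a ≤ e b ↔ a ≤ b :=
  le_iff_of_injective_of_map_inf he.1 he.2.1

/-- For an ideal element `y` and a filter element `x` of a canonical extension,
`y ≤ x` iff every element of the ideal `I_y` is below every element of the
filter `F_x`. -/
theorem stmt_9 {L C : Type*} [Lattice L] [BoundedOrder L] [CompleteLattice C]
    (e : L → C) (he : IsCanonExt e) (x y : C)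
    (hx : FilterElt e x) (hy : IdealElt e y) :
    y ≤ x ↔ ∀ a b : L, e a ≤ y → x ≤ e b → a ≤ b := by
  refine ⟨fun h a b hay hxb => he.le_iff.1 ((hay.trans h).trans hxb), fun h => ?_⟩
  obtain ⟨S, rfl⟩ := hx
  obtain ⟨T, rfl⟩ := hy
  refine sSup_le (Set.forall_mem_image.2 fun a haT =>
    le_sInf (Set.forall_mem_image.2 fun b hbS => he.le_iff.2 ?_))
  exact h a b (le_sSup (Set.mem_image_of_mem e haT)) (sInf_le (Set.mem_image_of_mem e hbS))
end

section
/- In the canonical extension C of a bounded lattice L, every family Y of down-directed subsets of L satisfies the restricted complete distributive law: ⋁{⋀Y : Y ∈ 𝒴} = ⋀{⋁Z : Z ∈ 𝒴♯}, where 𝒴♯ = {Z ⊆ L : Z ∩ Y ≠ ∅ for all Y ∈ 𝒴}. -/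
/-- The family `𝒴♯` of the paper. -/
def transversals {α : Type*} (𝒴 : Set (Set α)) : Set (Set α) :=
  {Z | ∀ Y ∈ 𝒴, (Z ∩ Y).Nonempty}

theorem iSup_sInf_image_le_iInf_sSup_image_transversals {α β : Type*} [CompleteLattice β]
    (f : α → β) (𝒴 : Set (Set α)) :
    (⨆ Y ∈ 𝒴, sInf (f '' Y)) ≤ ⨅ Z ∈ transversals 𝒴, sSup (f '' Z) :=
  iSup₂_le fun Y hY => le_iInf₂ fun _ hZ => by
    obtain ⟨z, hzZ, hzY⟩ := hZ Y hY
    exact (sInf_le (Set.mem_image_of_mem f hzY)).trans (le_sSup (Set.mem_image_of_mem f hzZ))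

theorem DirectedOn.exists_le_finset_inf {α : Type*} [SemilatticeInf α] [OrderTop α]
    {Y : Set α} (hY : DirectedOn (· ≥ ·) Y) (hne : Y.Nonempty) {T : Finset α} (hT : ↑T ⊆ Y) :
    ∃ y ∈ Y, y ≤ T.inf id := by
  classical
  have := hne.to_subtype
  obtain ⟨y, hy⟩ := hY.directed_val.finset_le (T.subtype (· ∈ Y))
  exact ⟨y, y.2, Finset.le_inf fun a ha => hy ⟨a, hT ha⟩ (Finset.mem_subtype.2 ha)⟩

namespace IsCanonExt

variable {L C : Type*} [Lattice L] [BoundedOrder L] [CompleteLattice C] {e : L → C}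

def toSupBotHom (he : IsCanonExt e) : SupBotHom L C where
  toFun := e
  map_sup' := he.2.2.1
  map_bot' := he.2.2.2.1

theorem map_finset_sup_le_sSup_image (he : IsCanonExt e) {S : Set L} {T : Finset L}
    (hT : ↑T ⊆ S) : e (T.sup id) ≤ sSup (e '' S) := by
  change he.toSupBotHom (T.sup id) ≤ _
  rw [map_finset_sup]
  exact Finset.sup_le fun a ha => le_sSup (Set.mem_image_of_mem e (hT ha))

theorem exists_mem_le_of_sInf_le_sSup (he : IsCanonExt e) {Y S : Set L}
    (hY : DirectedOn (· ≥ ·) Y) (hne : Y.Nonempty) (h : sInf (e '' Y) ≤ sSup (e '' S)) :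
    ∃ y ∈ Y, e y ≤ sSup (e '' S) := by
  obtain ⟨Y', S', hY', hS', hle⟩ := he.2.2.2.2.2.2.2 Y S h
  obtain ⟨y, hyY, hy⟩ := hY.exists_le_finset_inf hne hY'
  exact ⟨y, hyY, (he.monotone (hy.trans hle)).trans (he.map_finset_sup_le_sSup_image hS')⟩

theorem le_of_forall_le_sSup_image (he : IsCanonExt e) {x y : C}
    (h : ∀ S : Set L, x ≤ sSup (e '' S) → y ≤ sSup (e '' S)) : y ≤ x := by
  obtain ⟨𝒮, rfl⟩ := he.2.2.2.2.2.2.1 x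
  exact le_iInf₂ fun S hS => h S (iInf₂_le S hS)

theorem iInf_sSup_image_transversals_le (he : IsCanonExt e) {𝒴 : Set (Set L)}
    (hdir : ∀ Y ∈ 𝒴, DirectedOn (· ≥ ·) Y) :
    (⨅ Z ∈ transversals 𝒴, sSup (e '' Z)) ≤ ⨆ Y ∈ 𝒴, sInf (e '' Y) := by
  by_cases hempty : ∅ ∈ 𝒴
  · exact le_top.trans (le_iSup₂_of_le ∅ hempty (by simp))
  refine he.le_of_forall_le_sSup_image fun S hS => ?_
  have hZ : e ⁻¹' Set.Iic (sSup (e '' S)) ∈ transversals 𝒴 := by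
    intro Y hY
    have hne : Y.Nonempty := Set.nonempty_iff_ne_empty.2 fun h => hempty (h ▸ hY)
    obtain ⟨y, hyY, hy⟩ :=
      he.exists_mem_le_of_sInf_le_sSup (hdir Y hY) hne ((le_iSup₂_of_le Y hY le_rfl).trans hS)
    exact ⟨y, hy, hyY⟩
  exact (iInf₂_le _ hZ).trans (sSup_le (Set.forall_mem_image.2 fun _ hy => hy))

end IsCanonExt

/-- Restricted complete distributivity in canonical extensions: for any family
`𝒴` of down-directed subsets of `L`,
`⋁{⋀Y : Y ∈ 𝒴} = ⋀{⋁Z : Z ∈ 𝒴♯}` where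
`𝒴♯ = {Z ⊆ L : Z ∩ Y ≠ ∅ for all Y ∈ 𝒴}`. -/
theorem stmt_10 {L C : Type*} [Lattice L] [BoundedOrder L] [CompleteLattice C]
    (e : L → C) (he : IsCanonExt e)
    (𝒴 : Set (Set L)) (hdir : ∀ Y ∈ 𝒴, DirectedOn (· ≥ ·) Y) :
    (⨆ Y ∈ 𝒴, sInf (e '' Y)) =
      ⨅ Z ∈ {Z : Set L | ∀ Y ∈ 𝒴, (Z ∩ Y).Nonempty}, sSup (e '' Z) :=
  le_antisymm (iSup_sInf_image_le_iInf_sSup_image_transversals e 𝒴)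
    (he.iInf_sSup_image_transversals_le hdir)
end

section
/- Let L be a bounded lattice and δ the topology on its canonical extension C generated by the intervals [x, y] with x a filter element and y an ideal element. Then (C, δ) is Hausdorff, the image of L is topologically dense in (C, δ), and the isolated points of (C, δ) are exactly the elements of L. -/
/-!
Compactness gives interpolation: whenever a filter element `x` lies below an ideal element `y`,
some `e a` lies between them. With density this shows that filter elements are closed under
binary joins and ideal elements under binary meets, so the intervals `[x, y]` form a base of `δ`.
A basic interval is nonempty only if `x ≤ y`, and then it contains some `e a`; it is a singleton
`{c}` only if `x = c = y`, and then `c = e a`. Conversely `{e a} = [e a, e a]` is basic. Points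
`c ≰ d` are separated by `[x, ⊤]` and `[⊥, y]`, where density provides a filter element `x ≤ c`
and an ideal element `y ≥ d` with `x ≰ y`.
-/

open TopologicalSpace

section

variable {L C : Type*} [Lattice L] [BoundedOrder L] [CompleteLattice C] {e : L → C}

def deltaBasis (e : L → C) : Set (Set C) :=
  {U : Set C | ∃ x y : C, FilterElt e x ∧ IdealElt e y ∧ U = Set.Icc x y}

theorem filterElt_apply (a : L) : FilterElt e (e a) := ⟨{a}, by simp⟩

theorem idealElt_apply (a : L) : IdealElt e (e a) := ⟨{a}, by simp⟩

namespace IsCanonExt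

variable (he : IsCanonExt e)
include he

def toBoundedLatticeHom : BoundedLatticeHom L C where
  toFun := e
  map_sup' := he.2.2.1
  map_inf' := he.2.1
  map_top' := he.2.2.2.2.1
  map_bot' := he.2.2.2.1

theorem compact {S T : Set L} (h : sInf (e '' S) ≤ sSup (e '' T)) :
    ∃ S' T' : Finset L, ↑S' ⊆ S ∧ ↑T' ⊆ T ∧ S'.inf id ≤ T'.sup id :=
  he.2.2.2.2.2.2.2 S T h

theorem le_of_forall_filterElt {c z : C} (h : ∀ x, FilterElt e x → x ≤ c → x ≤ z) : c ≤ z := by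
  obtain ⟨𝒮, h𝒮⟩ := he.2.2.2.2.2.1 c
  rw [h𝒮] at h ⊢
  exact iSup₂_le fun S hS => h _ ⟨S, rfl⟩ (le_iSup₂ (f := fun S _ => sInf (e '' S)) S hS)

theorem le_of_forall_idealElt {c z : C} (h : ∀ y, IdealElt e y → c ≤ y → z ≤ y) : z ≤ c := by
  obtain ⟨𝒯, h𝒯⟩ := he.2.2.2.2.2.2.1 c
  rw [h𝒯] at h ⊢
  exact le_iInf₂ fun T hT => h _ ⟨T, rfl⟩ (iInf₂_le (f := fun T _ => sSup (e '' T)) T hT)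

theorem exists_between_of_le {x y : C} (hx : FilterElt e x) (hy : IdealElt e y) (hxy : x ≤ y) :
    ∃ a : L, x ≤ e a ∧ e a ≤ y := by
  obtain ⟨S, rfl⟩ := hx
  obtain ⟨T, rfl⟩ := hy
  obtain ⟨S', T', hS', hT', hST⟩ := he.compact hxy
  let f := he.toBoundedLatticeHom
  refine ⟨S'.inf id, ?_, ?_⟩
  · change _ ≤ f (S'.inf id)
    rw [map_finset_inf]
    exact Finset.le_inf fun a ha => sInf_le (Set.mem_image_of_mem e (hS' ha))
  · calc e (S'.inf id) ≤ f (T'.sup id) := OrderHomClass.mono f hST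
      _ = T'.sup (f ∘ id) := map_finset_sup f T' id
      _ ≤ sSup (e '' T) := Finset.sup_le fun a ha => le_sSup (Set.mem_image_of_mem e (hT' ha))

theorem filterElt_sup {x₁ x₂ : C} (h₁ : FilterElt e x₁) (h₂ : FilterElt e x₂) :
    FilterElt e (x₁ ⊔ x₂) := by
  refine ⟨{a | x₁ ⊔ x₂ ≤ e a}, le_antisymm (le_sInf ?_) (he.le_of_forall_idealElt ?_)⟩
  · rintro _ ⟨a, ha, rfl⟩
    exact ha
  · intro y hy hxy
    obtain ⟨a, ha, hay⟩ := he.exists_between_of_le h₁ hy (le_sup_left.trans hxy)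
    obtain ⟨b, hb, hby⟩ := he.exists_between_of_le h₂ hy (le_sup_right.trans hxy)
    have hab : e (a ⊔ b) = e a ⊔ e b := he.2.2.1 a b
    have hmem : x₁ ⊔ x₂ ≤ e (a ⊔ b) := hab ▸ sup_le_sup ha hb
    exact sInf_le_of_le ⟨a ⊔ b, hmem, rfl⟩ (hab ▸ sup_le hay hby)

theorem idealElt_inf {y₁ y₂ : C} (h₁ : IdealElt e y₁) (h₂ : IdealElt e y₂) :
    IdealElt e (y₁ ⊓ y₂) := by
  refine ⟨{a | e a ≤ y₁ ⊓ y₂}, le_antisymm (he.le_of_forall_filterElt ?_) (sSup_le ?_)⟩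
  · intro x hx hxy
    obtain ⟨a, hxa, ha⟩ := he.exists_between_of_le hx h₁ (hxy.trans inf_le_left)
    obtain ⟨b, hxb, hb⟩ := he.exists_between_of_le hx h₂ (hxy.trans inf_le_right)
    have hab : e (a ⊓ b) = e a ⊓ e b := he.2.1 a b
    have hmem : e (a ⊓ b) ≤ y₁ ⊓ y₂ := hab ▸ inf_le_inf ha hb
    exact le_sSup_of_le ⟨a ⊓ b, hmem, rfl⟩ (hab ▸ le_inf hxa hxb)
  · rintro _ ⟨a, ha, rfl⟩
    exact ha

theorem filterElt_bot : FilterElt e ⊥ := ⟨{⊥}, by simp [he.2.2.2.1]⟩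

theorem idealElt_top : IdealElt e ⊤ := ⟨{⊤}, by simp [he.2.2.2.2.1]⟩

theorem isTopologicalBasis_deltaBasis :
    @IsTopologicalBasis C (generateFrom (deltaBasis e)) (deltaBasis e) := by
  let := generateFrom (deltaBasis e)
  refine ⟨?_, ?_, rfl⟩
  · rintro _ ⟨x₁, y₁, hx₁, hy₁, rfl⟩ _ ⟨x₂, y₂, hx₂, hy₂, rfl⟩ c hc
    rw [Set.Icc_inter_Icc] at hc ⊢
    exact ⟨_, ⟨_, _, he.filterElt_sup hx₁ hx₂, he.idealElt_inf hy₁ hy₂, rfl⟩, hc, subset_rfl⟩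
  · rw [← Set.univ_subset_iff, ← Set.Icc_bot_top]
    exact Set.subset_sUnion_of_mem ⟨⊥, ⊤, he.filterElt_bot, he.idealElt_top, rfl⟩

variable [TopologicalSpace C] (hb : IsTopologicalBasis (deltaBasis e))
include hb

theorem exists_separating_of_not_le {c d : C} (hcd : ¬ c ≤ d) :
    ∃ u v : Set C, IsOpen u ∧ IsOpen v ∧ c ∈ u ∧ d ∈ v ∧ Disjoint u v := by
  obtain ⟨x, hx, hxc, hxd⟩ : ∃ x, FilterElt e x ∧ x ≤ c ∧ ¬ x ≤ d := by
    by_contra! h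
    exact hcd (he.le_of_forall_filterElt h)
  obtain ⟨y, hy, hdy, hxy⟩ : ∃ y, IdealElt e y ∧ d ≤ y ∧ ¬ x ≤ y := by
    by_contra! h
    exact hxd (he.le_of_forall_idealElt h)
  refine ⟨_, _, hb.isOpen ⟨x, ⊤, hx, he.idealElt_top, rfl⟩,
    hb.isOpen ⟨⊥, y, he.filterElt_bot, hy, rfl⟩, ⟨hxc, le_top⟩, ⟨bot_le, hdy⟩, ?_⟩
  exact Set.disjoint_left.mpr fun z hz hz' => hxy (hz.1.trans hz'.2)

theorem t2Space : T2Space C := by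
  refine ⟨fun c d hcd => ?_⟩
  by_cases hle : c ≤ d
  · obtain ⟨u, v, hu, hv, hdu, hcv, huv⟩ :=
      he.exists_separating_of_not_le hb fun h => hcd (le_antisymm hle h)
    exact ⟨v, u, hv, hu, hcv, hdu, huv.symm⟩
  · exact he.exists_separating_of_not_le hb hle

theorem dense_range : Dense (Set.range e) := by
  rw [hb.dense_iff]
  rintro _ ⟨x, y, hx, hy, rfl⟩ ⟨z, hz⟩
  obtain ⟨a, hxa, hay⟩ := he.exists_between_of_le hx hy (hz.1.trans hz.2)
  exact ⟨e a, ⟨hxa, hay⟩, a, rfl⟩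

theorem mem_range_iff_isOpen_singleton (c : C) : c ∈ Set.range e ↔ IsOpen {c} := by
  constructor
  · rintro ⟨a, rfl⟩
    exact Set.Icc_self (e a) ▸ hb.isOpen ⟨e a, e a, filterElt_apply a, idealElt_apply a, rfl⟩
  · intro hc
    obtain ⟨_, ⟨x, y, hx, hy, rfl⟩, hcxy, hsub⟩ := hb.isOpen_iff.mp hc c rfl
    have hxy : x ≤ y := hcxy.1.trans hcxy.2
    obtain ⟨a, hxa, hay⟩ := he.exists_between_of_le hx hy hxy
    have hxc : x = c := hsub ⟨le_rfl, hxy⟩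
    have hyc : y = c := hsub ⟨hxy, le_rfl⟩
    exact ⟨a, le_antisymm (hyc ▸ hay) (hxc ▸ hxa)⟩

end IsCanonExt

end

/-- With the topology `δ` on the canonical extension `C` generated by the
intervals `[x, y]` (`x` a filter element, `y` an ideal element), the space
`(C, δ)` is Hausdorff, the image of `L` is dense, and the isolated points are
exactly the points of `e(L)`. -/
theorem stmt_12 {L C : Type*} [Lattice L] [BoundedOrder L] [CompleteLattice C]
    (e : L → C) (he : IsCanonExt e) :
    let δ : TopologicalSpace C := TopologicalSpace.generateFrom
      {U : Set C | ∃ x y : C, FilterElt e x ∧ IdealElt e y ∧ U = Set.Icc x y}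
    @T2Space C δ ∧ @Dense C δ (Set.range e) ∧
      ∀ c : C, c ∈ Set.range e ↔ @IsOpen C δ {c} := by
  intro δ
  have hb : @IsTopologicalBasis C δ (deltaBasis e) := he.isTopologicalBasis_deltaBasis
  exact ⟨he.t2Space hb, he.dense_range hb, he.mem_range_iff_isOpen_singleton hb⟩
end

section
/- Let (L_x)_{x∈X} be a family of bounded lattices and L ≤ ∏_X L_x a Boolean product (a subdirect product over a Boolean space X with clopen equalisers and the patching property). Then the canonical extension of L is ∏_X L_x^δ, the product of the canonical extensions, via the coordinate-wise embedding. -/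
open Set Function OrderDual

def IsSupInfDense {ι C : Type*} [CompleteLattice C] (f : ι → C) : Prop :=
  ∀ c : C, ∃ 𝒮 : Set (Set ι), c = ⨆ T ∈ 𝒮, sInf (f '' T)

def IsInfSupDense {ι C : Type*} [CompleteLattice C] (f : ι → C) : Prop :=
  ∀ c : C, ∃ 𝒮 : Set (Set ι), c = ⨅ T ∈ 𝒮, sSup (f '' T)

section Density

variable {ι κ C : Type*} [CompleteLattice C] {f : ι → C}

theorem IsSupInfDense.comp_surjective (hf : IsSupInfDense f) {g : κ → ι} (hg : Surjective g) :
    IsSupInfDense (f ∘ g) := by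
  intro c
  obtain ⟨𝒮, rfl⟩ := hf c
  refine ⟨preimage g '' 𝒮, ?_⟩
  simp only [iSup_image, image_comp, image_preimage_eq _ hg]

theorem IsInfSupDense.comp_surjective (hf : IsInfSupDense f) {g : κ → ι} (hg : Surjective g) :
    IsInfSupDense (f ∘ g) := by
  intro c
  obtain ⟨𝒮, rfl⟩ := hf c
  refine ⟨preimage g '' 𝒮, ?_⟩
  simp only [iInf_image, image_comp, image_preimage_eq _ hg]

end Density

section PiDensity

variable {ι X : Type*} {C : X → Type*} [∀ x, CompleteLattice (C x)] {f : ι → ∀ x, C x}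

theorem Pi.isSupInfDense (hf : ∀ x, IsSupInfDense fun i => f i x)
    (hsep : ∀ x y, x ≠ y → ∃ i, f i x = ⊤ ∧ f i y = ⊥) : IsSupInfDense f := by
  intro c
  refine ⟨{T | sInf (f '' T) ≤ c}, le_antisymm (fun x => ?_) (iSup₂_le fun T hT => hT)⟩
  obtain ⟨𝒮, hc⟩ := hf x (c x)
  rw [hc]
  refine iSup₂_le fun T hT => ?_
  -- adjoining the indices that are `⊤` at `x` keeps the meet at `x` and makes it `⊥` elsewhere
  set T' := T ∪ {i | f i x = ⊤}
  have hT'x : sInf ((fun i => f i x) '' T) ≤ sInf (f '' T') x := by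
    rw [sInf_apply_eq_sInf_image, image_image]
    refine le_sInf ?_
    rintro _ ⟨i, hi | hi, rfl⟩
    · exact sInf_le (mem_image_of_mem _ hi)
    · exact le_top.trans_eq hi.symm
  have hT'c : sInf (f '' T') ≤ c := by
    intro y
    rcases eq_or_ne y x with rfl | hyx
    · rw [sInf_apply_eq_sInf_image, image_image]
      refine (sInf_le_sInf (image_mono subset_union_left)).trans ?_
      rw [hc]
      exact le_iSup₂ (f := fun T _ => sInf ((fun i => f i y) '' T)) T hT
    · obtain ⟨i, hix, hiy⟩ := hsep x y hyx.symm
      calc sInf (f '' T') y ≤ f i y := (sInf_le (mem_image_of_mem f (Or.inr hix))) y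
        _ ≤ c y := hiy ▸ bot_le
  exact hT'x.trans ((le_iSup₂ (f := fun T _ => sInf (f '' T)) T' hT'c) x)

theorem Pi.isInfSupDense (hf : ∀ x, IsInfSupDense fun i => f i x)
    (hsep : ∀ x y, x ≠ y → ∃ i, f i x = ⊤ ∧ f i y = ⊥) : IsInfSupDense f :=
  Pi.isSupInfDense (C := fun x => (C x)ᵒᵈ) (f := fun i x => toDual (f i x)) (fun x => hf x)
    fun x y hxy => (hsep y x hxy.symm).imp fun _ hi => ⟨hi.2, hi.1⟩

end PiDensity

namespace IsCanonExt

variable {L C : Type*} [Lattice L] [BoundedOrder L] [CompleteLattice C] {e : L → C}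

theorem injective (he : IsCanonExt e) : Injective e := he.1

theorem map_bot (he : IsCanonExt e) : e ⊥ = ⊥ := he.2.2.2.1

theorem map_top (he : IsCanonExt e) : e ⊤ = ⊤ := he.2.2.2.2.1

theorem isSupInfDense (he : IsCanonExt e) : IsSupInfDense e := he.2.2.2.2.2.1

theorem isInfSupDense (he : IsCanonExt e) : IsInfSupDense e := he.2.2.2.2.2.2.1

theorem exists_finset_inf_le_sup_of_sInf_le_sSup (he : IsCanonExt e) {ι : Type*} (g : ι → L)
    {A B : Set ι} (h : sInf ((e ∘ g) '' A) ≤ sSup ((e ∘ g) '' B)) :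
    ∃ F G : Finset ι, ↑F ⊆ A ∧ ↑G ⊆ B ∧ F.inf g ≤ G.sup g := by
  classical
  rw [image_comp, image_comp] at h
  obtain ⟨F', G', hF', hG', hle⟩ := he.2.2.2.2.2.2.2 _ _ h
  obtain ⟨F, hFA, rfl⟩ := Finset.subset_set_image_iff.1 hF'
  obtain ⟨G, hGB, rfl⟩ := Finset.subset_set_image_iff.1 hG'
  refine ⟨F, G, hFA, hGB, ?_⟩
  simpa [Finset.inf_image, Finset.sup_image] using hle

end IsCanonExt

section BooleanProduct

variable {X : Type*} {L : X → Type*} [∀ x, Lattice (L x)] [∀ x, BoundedOrder (L x)]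
  {S : Set (∀ x, L x)}

theorem exists_mem_eq_top_eq_bot [TopologicalSpace X] [TotallySeparatedSpace X]
    (hbot : ⊥ ∈ S) (htop : ⊤ ∈ S)
    (hpatch : ∀ u ∈ S, ∀ v ∈ S, ∀ N : Set X, IsClopen N →
      ∃ w ∈ S, (∀ x ∈ N, w x = u x) ∧ ∀ x ∉ N, w x = v x)
    {x y : X} (hxy : x ≠ y) : ∃ w ∈ S, w x = ⊤ ∧ w y = ⊥ := by
  obtain ⟨N, hN, hxN, hyN⟩ := exists_isClopen_of_totally_separated hxy
  obtain ⟨w, hwS, hwN, hwNc⟩ := hpatch ⊤ htop ⊥ hbot N hN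
  exact ⟨w, hwS, hwN x hxN, hwNc y hyN⟩

theorem finset_inf_mem (htop : ⊤ ∈ S) (hmeet : ∀ u ∈ S, ∀ v ∈ S, u ⊓ v ∈ S) (F : Finset S) :
    F.inf (fun u => u.1) ∈ S :=
  Finset.inf_induction htop hmeet fun u _ => u.2

theorem finset_sup_mem (hbot : ⊥ ∈ S) (hjoin : ∀ u ∈ S, ∀ v ∈ S, u ⊔ v ∈ S) (G : Finset S) :
    G.sup (fun u => u.1) ∈ S :=
  Finset.sup_induction hbot hjoin fun u _ => u.2

theorem isClopen_setOf_finset_inf_le_sup [TopologicalSpace X] (hbot : ⊥ ∈ S) (htop : ⊤ ∈ S)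
    (hmeet : ∀ u ∈ S, ∀ v ∈ S, u ⊓ v ∈ S) (hjoin : ∀ u ∈ S, ∀ v ∈ S, u ⊔ v ∈ S)
    (heq : ∀ u ∈ S, ∀ v ∈ S, IsClopen {x | u x = v x}) (F G : Finset S) :
    IsClopen {x | F.inf (fun u => u.1 x) ≤ G.sup (fun u => u.1 x)} := by
  have hF := finset_inf_mem htop hmeet F
  convert heq _ (hmeet _ hF _ (finset_sup_mem hbot hjoin G)) _ hF using 2 with x
  simp only [Pi.inf_apply, Finset.inf_apply, Finset.sup_apply, inf_eq_left]

theorem exists_finset_forall_inf_le_sup [TopologicalSpace X] [CompactSpace X]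
    (hbot : ⊥ ∈ S) (htop : ⊤ ∈ S)
    (hmeet : ∀ u ∈ S, ∀ v ∈ S, u ⊓ v ∈ S) (hjoin : ∀ u ∈ S, ∀ v ∈ S, u ⊔ v ∈ S)
    (heq : ∀ u ∈ S, ∀ v ∈ S, IsClopen {x | u x = v x}) {A B : Set S}
    (h : ∀ x, ∃ F G : Finset S, ↑F ⊆ A ∧ ↑G ⊆ B ∧
      F.inf (fun u => u.1 x) ≤ G.sup (fun u => u.1 x)) :
    ∃ F G : Finset S, ↑F ⊆ A ∧ ↑G ⊆ B ∧
      ∀ x, F.inf (fun u => u.1 x) ≤ G.sup (fun u => u.1 x) := by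
  classical
  choose F G hFA hGB hFG using h
  obtain ⟨t, ht⟩ := isCompact_univ.elim_finite_subcover
    (fun x => {y | (F x).inf (fun u => u.1 y) ≤ (G x).sup (fun u => u.1 y)})
    (fun x => (isClopen_setOf_finset_inf_le_sup hbot htop hmeet hjoin heq (F x) (G x)).isOpen)
    (fun x _ => mem_iUnion.2 ⟨x, hFG x⟩)
  refine ⟨t.biUnion F, t.biUnion G, ?_, ?_, fun y => ?_⟩
  · simpa using fun x _ => hFA x
  · simpa using fun x _ => hGB x
  obtain ⟨x, hxt, hy⟩ := mem_iUnion₂.1 (ht (mem_univ y))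
  calc (t.biUnion F).inf (fun u => u.1 y) ≤ (F x).inf (fun u => u.1 y) :=
        Finset.inf_mono (Finset.subset_biUnion_of_mem F hxt)
    _ ≤ (G x).sup (fun u => u.1 y) := hy
    _ ≤ (t.biUnion G).sup (fun u => u.1 y) :=
        Finset.sup_mono (Finset.subset_biUnion_of_mem G hxt)

end BooleanProduct

/-- Canonical extensions of Boolean products: if `L ≤ ∏_X L_x` is a Boolean
product of bounded lattices, then the coordinate-wise embedding of `L` into
the product `∏_X L_x^δ` of the canonical extensions is a canonical extension
of `L` (injective lattice embedding, dense, and compact). -/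
theorem stmt_15 {X : Type*} [TopologicalSpace X] [CompactSpace X] [T2Space X]
    [TotallyDisconnectedSpace X]
    {Lx : X → Type*} [∀ x, Lattice (Lx x)] [∀ x, BoundedOrder (Lx x)]
    (S : Set (∀ x, Lx x))
    (hbot : (⊥ : ∀ x, Lx x) ∈ S) (htop : (⊤ : ∀ x, Lx x) ∈ S)
    (hmeet : ∀ u ∈ S, ∀ v ∈ S, u ⊓ v ∈ S) (hjoin : ∀ u ∈ S, ∀ v ∈ S, u ⊔ v ∈ S)
    (hsubdirect : ∀ (x : X) (a : Lx x), ∃ u ∈ S, u x = a)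
    (heq : ∀ u ∈ S, ∀ v ∈ S, IsClopen {x | u x = v x})
    (hpatch : ∀ u ∈ S, ∀ v ∈ S, ∀ N : Set X, IsClopen N →
      ∃ w ∈ S, (∀ x ∈ N, w x = u x) ∧ ∀ x ∉ N, w x = v x)
    {Cx : X → Type*} [∀ x, CompleteLattice (Cx x)]
    (e : ∀ x, Lx x → Cx x) (he : ∀ x, IsCanonExt (e x)) :
    let f : ↥S → ∀ x, Cx x := fun u x => e x (u.1 x)
    Function.Injective f ∧
    (∀ c : ∀ x, Cx x, ∃ 𝒮 : Set (Set ↥S), c = ⨆ T ∈ 𝒮, sInf (f '' T)) ∧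
    (∀ c : ∀ x, Cx x, ∃ 𝒮 : Set (Set ↥S), c = ⨅ T ∈ 𝒮, sSup (f '' T)) ∧
    (∀ A B : Set ↥S, sInf (f '' A) ≤ sSup (f '' B) →
      ∃ F G : Finset ↥S, ↑F ⊆ A ∧ ↑G ⊆ B ∧
        ∀ x : X, F.inf (fun u => u.1 x) ≤ G.sup (fun u => u.1 x)) := by
  intro f
  have heval : ∀ x, Surjective fun u : S => u.1 x := fun x a =>
    let ⟨u, hu, hux⟩ := hsubdirect x a
    ⟨⟨u, hu⟩, hux⟩
  have hsep : ∀ x y, x ≠ y → ∃ u, f u x = ⊤ ∧ f u y = ⊥ := fun x y hxy => by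
    obtain ⟨w, hwS, hwx, hwy⟩ := exists_mem_eq_top_eq_bot hbot htop hpatch hxy
    exact ⟨⟨w, hwS⟩, by simp [f, hwx, (he x).map_top], by simp [f, hwy, (he y).map_bot]⟩
  refine ⟨fun u v huv => Subtype.ext (funext fun x => (he x).injective (congrFun huv x)),
    Pi.isSupInfDense (fun x => (he x).isSupInfDense.comp_surjective (heval x)) hsep,
    Pi.isInfSupDense (fun x => (he x).isInfSupDense.comp_surjective (heval x)) hsep,
    fun A B hAB => exists_finset_forall_inf_le_sup hbot htop hmeet hjoin heq fun x =>
      (he x).exists_finset_inf_le_sup_of_sInf_le_sSup (fun u : S => u.1 x) ?_⟩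
  have hABx := hAB x
  rwa [sInf_apply_eq_sInf_image, sSup_apply_eq_sSup_image, image_image, image_image] at hABx
end

section
/- Let C be a perfect lattice (completely join-irreducibles are join-dense and completely meet-irreducibles are meet-dense) such that for every completely join-irreducible p, the complement of ↑p is the downset of a finite set of completely meet-irreducibles, and dually. Then C is algebraic: every element of the finite-join closure of J^∞(C) is compact, and every element of C is a directed join of such elements. -/
/-- `p` is completely join-irreducible: whenever `p` is the supremum of a set,
`p` belongs to that set. -/
def CompJoinIrred {C : Type*} [CompleteLattice C] (p : C) : Prop :=
  ∀ S : Set C, p = sSup S → p ∈ S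

/-- `m` is completely meet-irreducible: whenever `m` is the infimum of a set,
`m` belongs to that set. -/
def CompMeetIrred {C : Type*} [CompleteLattice C] (m : C) : Prop :=
  ∀ S : Set C, m = sInf S → m ∈ S

/-!
Under (★) the principal filter `↑p` of a completely join-irreducible `p` is the complement of
the finite union of principal ideals `⋃ m ∈ M_p, ↓m`. Principal ideals are closed under directed
joins, hence so is a finite union of them, so `↑p` is inaccessible by directed joins: `p` is
compact. Finite joins of compact elements are compact, and by join-density every `c` is the
join of the sup-closure of `{p ∈ J^∞(C) | p ≤ c}`, which is directed and consists of finite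
joins of completely join-irreducibles.
-/

open Set

theorem dirSupClosed_biUnion_finset {α ι : Type*} [Preorder α] (t : Finset ι) {f : ι → Set α}
    (hf : ∀ i ∈ t, DirSupClosed (f i)) : DirSupClosed (⋃ i ∈ t, f i) := by
  classical
  induction t using Finset.induction_on with
  | empty => simp
  | insert i t _ ih =>
    simp only [Finset.mem_insert, forall_eq_or_imp] at hf
    rw [Finset.set_biUnion_insert]
    exact hf.1.union (ih hf.2)

theorem CompleteLattice.isCompactElement_of_dirSupInacc_Ici {α : Type*} [CompleteLattice α]
    {k : α} (hk : DirSupInacc (Ici k)) : IsCompactElement k := by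
  rw [isCompactElement_iff_le_of_directed_sSup_le]
  intro D hne hdir hle
  obtain ⟨d, hdD, hkd⟩ := hk hne hdir (isLUB_sSup D) hle
  exact ⟨d, hdD, hkd⟩

theorem CompleteLattice.isCompactElement_of_not_le_iff_exists_le {α : Type*} [CompleteLattice α]
    {k : α} (M : Finset α) (hM : ∀ c, ¬ k ≤ c ↔ ∃ m ∈ M, c ≤ m) : IsCompactElement k := by
  have hcompl : (Ici k)ᶜ = ⋃ m ∈ M, Iic m := by
    ext c
    simpa using hM c
  refine isCompactElement_of_dirSupInacc_Ici (DirSupInacc.of_compl ?_)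
  rw [hcompl]
  exact dirSupClosed_biUnion_finset M fun m _ => dirSupClosed_Iic m

theorem stmt_16_general {C : Type*} [CompleteLattice C]
    (hjdense : ∀ c : C, c = sSup {p : C | CompJoinIrred p ∧ p ≤ c})
    (hstar : ∀ p : C, CompJoinIrred p → ∃ M : Finset C,
      (∀ m ∈ M, CompMeetIrred m) ∧ ∀ c : C, ¬ p ≤ c ↔ ∃ m ∈ M, c ≤ m) :
    (∀ k : C, (∃ F : Finset C, (∀ p ∈ F, CompJoinIrred p) ∧ k = F.sup id) →
      ∀ s : Set C, k ≤ sSup s → ∃ t : Finset C, ↑t ⊆ s ∧ k ≤ t.sup id) ∧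
    (∀ c : C, ∃ D : Set C,
      (∀ k ∈ D, ∃ F : Finset C, (∀ p ∈ F, CompJoinIrred p) ∧ k = F.sup id) ∧
      DirectedOn (· ≤ ·) D ∧ c = sSup D) := by
  refine ⟨?_, fun c => ?_⟩
  · rintro _ ⟨F, hF, rfl⟩
    rw [← CompleteLattice.isCompactElement_iff_exists_le_sSup_of_le_sSup]
    refine CompleteLattice.isCompactElement_finsetSup F fun p hp => ?_
    obtain ⟨M, -, hM⟩ := hstar p (hF p hp)
    exact CompleteLattice.isCompactElement_of_not_le_iff_exists_le M hM
  · refine ⟨supClosure {p | CompJoinIrred p ∧ p ≤ c}, ?_, supClosed_supClosure.directedOn, ?_⟩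
    · rintro _ ⟨F, hne, hF, rfl⟩
      exact ⟨F, fun p hp => (hF hp).1, Finset.sup'_eq_sup hne id⟩
    · rw [(isLUB_supClosure.2 (isLUB_sSup _)).sSup_eq]
      exact hjdense c

/-- A perfect lattice satisfying (★) and (★)^∂ is (doubly) algebraic: every
finite join of completely join-irreducibles is a compact element, and every
element is a directed join of such elements. -/
theorem stmt_16 {C : Type*} [CompleteLattice C]
    (hjdense : ∀ c : C, c = sSup {p : C | CompJoinIrred p ∧ p ≤ c})
    (hmdense : ∀ c : C, c = sInf {m : C | CompMeetIrred m ∧ c ≤ m})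
    (hstar : ∀ p : C, CompJoinIrred p → ∃ M : Finset C,
      (∀ m ∈ M, CompMeetIrred m) ∧ ∀ c : C, ¬ p ≤ c ↔ ∃ m ∈ M, c ≤ m)
    (hstard : ∀ m : C, CompMeetIrred m → ∃ J : Finset C,
      (∀ p ∈ J, CompJoinIrred p) ∧ ∀ c : C, ¬ c ≤ m ↔ ∃ p ∈ J, p ≤ c) :
    (∀ k : C, (∃ F : Finset C, (∀ p ∈ F, CompJoinIrred p) ∧ k = F.sup id) →
      ∀ s : Set C, k ≤ sSup s → ∃ t : Finset C, ↑t ⊆ s ∧ k ≤ t.sup id) ∧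
    (∀ c : C, ∃ D : Set C,
      (∀ k ∈ D, ∃ F : Finset C, (∀ p ∈ F, CompJoinIrred p) ∧ k = F.sup id) ∧
      DirectedOn (· ≤ ·) D ∧ c = sSup D) :=
  stmt_16_general hjdense hstar
end

section
/- Let C be a perfect lattice satisfying conditions (★) and (★)^∂. Then the Scott topology on C coincides with the upper (weak) topology generated by complements of principal downsets of elements of M^∞(C), and dually. -/
open Set TopologicalSpace Topology

namespace Topology

variable {C : Type*} [CompleteLattice C]

lemma isOpen_scott_iff {U : Set C} :
    IsOpen[scott C univ] U ↔ IsUpperSet U ∧ ∀ D : Set C, D.Nonempty →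
      DirectedOn (· ≤ ·) D → sSup D ∈ U → (D ∩ U).Nonempty := by
  let _ := scott C univ
  have : IsScott C univ := ⟨rfl⟩
  rw [IsScott.isOpen_iff_isUpperSet_and_dirSupInaccOn (D := univ), dirSupInaccOn_univ,
    dirSupInacc_iff_forall_sSup]

lemma exists_finset_sSup_mem_of_isOpen_scott {U s : Set C} (hU : IsOpen[scott C univ] U)
    (hs : sSup s ∈ U) : ∃ t : Finset C, ↑t ⊆ s ∧ sSup (t : Set C) ∈ U := by
  let f : Finset s → C := fun t ↦ ⨆ i ∈ t, (i : C)
  have hf : Monotone f := fun t₁ t₂ h ↦ biSup_mono fun _ hi ↦ h hi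
  have hsup : sSup (range f) = sSup s := by
    rw [sSup_range, sSup_eq_iSup', iSup_eq_iSup_finset (fun i : s ↦ (i : C))]
  obtain ⟨_, ⟨t, rfl⟩, ht⟩ := (isOpen_scott_iff.1 hU).2 (range f) (range_nonempty f)
    (directedOn_range.2 hf.directed_le) (hsup ▸ hs)
  refine ⟨t.map (Function.Embedding.subtype _), by simp, ?_⟩
  rwa [Finset.coe_map, sSup_image]

lemma scott_le_generateFrom_compl_Iic (M : Set C) :
    scott C univ ≤ generateFrom {V | ∃ m ∈ M, V = (Iic m)ᶜ} := by
  let _ := scott C univ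
  have : IsScott C univ := ⟨rfl⟩
  refine le_generateFrom ?_
  rintro _ ⟨m, -, rfl⟩
  exact isClosed_Iic.isOpen_compl

lemma isOpen_generateFrom_Ici {M : Set C} {p : C} {F : Finset C} (hF : ∀ m ∈ F, m ∈ M)
    (hp : ∀ c, ¬ p ≤ c ↔ ∃ m ∈ F, c ≤ m) :
    IsOpen[generateFrom {V | ∃ m ∈ M, V = (Iic m)ᶜ}] (Ici p) := by
  have : Ici p = ⋂ m ∈ F, (Iic m)ᶜ := by
    ext c
    rw [mem_Ici, ← not_not (a := p ≤ c), hp]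
    simp
  rw [this]
  let _ := generateFrom {V | ∃ m ∈ M, V = (Iic m)ᶜ}
  exact isOpen_biInter_finset fun m hm ↦ isOpen_generateFrom_of_mem ⟨m, hF m hm, rfl⟩

lemma generateFrom_compl_Iic_le_scott {J M : Set C}
    (hdense : ∀ c, c = sSup {p | p ∈ J ∧ p ≤ c})
    (hstar : ∀ p ∈ J, ∃ F : Finset C, (∀ m ∈ F, m ∈ M) ∧ ∀ c, ¬ p ≤ c ↔ ∃ m ∈ F, c ≤ m) :
    generateFrom {V | ∃ m ∈ M, V = (Iic m)ᶜ} ≤ scott C univ := by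
  intro U hU
  let _ := generateFrom {V | ∃ m ∈ M, V = (Iic m)ᶜ}
  refine isOpen_iff_forall_mem_open.2 fun x hx ↦ ?_
  obtain ⟨t, htJ, htU⟩ := exists_finset_sSup_mem_of_isOpen_scott hU (hdense x ▸ hx)
  refine ⟨⋂ p ∈ t, Ici p, fun c hc ↦ ?_, ?_, mem_iInter₂.2 fun p hp ↦ (htJ hp).2⟩
  · exact (isOpen_scott_iff.1 hU).1 (sSup_le fun p hp ↦ mem_iInter₂.1 hc p hp) htU
  · refine isOpen_biInter_finset fun p hp ↦ ?_
    obtain ⟨F, hFM, hF⟩ := hstar p (htJ hp).1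
    exact isOpen_generateFrom_Ici hFM hF

theorem scott_eq_generateFrom_compl_Iic {J M : Set C}
    (hdense : ∀ c, c = sSup {p | p ∈ J ∧ p ≤ c})
    (hstar : ∀ p ∈ J, ∃ F : Finset C, (∀ m ∈ F, m ∈ M) ∧ ∀ c, ¬ p ≤ c ↔ ∃ m ∈ F, c ≤ m) :
    scott C univ = generateFrom {V | ∃ m ∈ M, V = (Iic m)ᶜ} :=
  le_antisymm (scott_le_generateFrom_compl_Iic M) (generateFrom_compl_Iic_le_scott hdense hstar)

end Topology

theorem isScottOpen_iff_isOpen_generateFrom_compl_Iic_compMeetIrred {C : Type*}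
    [CompleteLattice C] (hjdense : ∀ c : C, c = sSup {p : C | CompJoinIrred p ∧ p ≤ c})
    (hstar : ∀ p : C, CompJoinIrred p → ∃ M : Finset C,
      (∀ m ∈ M, CompMeetIrred m) ∧ ∀ c : C, ¬ p ≤ c ↔ ∃ m ∈ M, c ≤ m)
    (U : Set C) :
    (IsUpperSet U ∧ ∀ D : Set C, D.Nonempty → DirectedOn (· ≤ ·) D →
        sSup D ∈ U → (D ∩ U).Nonempty) ↔
      IsOpen[generateFrom {V : Set C | ∃ m : C, CompMeetIrred m ∧ V = (Iic m)ᶜ}] U := by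
  rw [← isOpen_scott_iff,
    scott_eq_generateFrom_compl_Iic (J := {p | CompJoinIrred p}) hjdense hstar]
  rfl

/-- In a perfect lattice satisfying (★) and (★)^∂, the Scott topology equals
the upper topology generated by the complements of principal downsets of
completely meet-irreducibles; dually for the dual Scott and lower topologies. -/
theorem stmt_17 {C : Type*} [CompleteLattice C]
    (hjdense : ∀ c : C, c = sSup {p : C | CompJoinIrred p ∧ p ≤ c})
    (hmdense : ∀ c : C, c = sInf {m : C | CompMeetIrred m ∧ c ≤ m})
    (hstar : ∀ p : C, CompJoinIrred p → ∃ M : Finset C,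
      (∀ m ∈ M, CompMeetIrred m) ∧ ∀ c : C, ¬ p ≤ c ↔ ∃ m ∈ M, c ≤ m)
    (hstard : ∀ m : C, CompMeetIrred m → ∃ J : Finset C,
      (∀ p ∈ J, CompJoinIrred p) ∧ ∀ c : C, ¬ c ≤ m ↔ ∃ p ∈ J, p ≤ c) :
    (∀ U : Set C,
      (IsUpperSet U ∧ ∀ D : Set C, D.Nonempty → DirectedOn (· ≤ ·) D →
          sSup D ∈ U → (D ∩ U).Nonempty) ↔
      (TopologicalSpace.generateFrom
          {V : Set C | ∃ m : C, CompMeetIrred m ∧ V = (Set.Iic m)ᶜ}).IsOpen U) ∧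
    (∀ U : Set C,
      (IsLowerSet U ∧ ∀ D : Set C, D.Nonempty → DirectedOn (· ≥ ·) D →
          sInf D ∈ U → (D ∩ U).Nonempty) ↔
      (TopologicalSpace.generateFrom
          {V : Set C | ∃ p : C, CompJoinIrred p ∧ V = (Set.Ici p)ᶜ}).IsOpen U) :=
  ⟨isScottOpen_iff_isOpen_generateFrom_compl_Iic_compMeetIrred hjdense hstar,
    isScottOpen_iff_isOpen_generateFrom_compl_Iic_compMeetIrred (C := Cᵒᵈ) hmdense hstard⟩
end

section
/- Let h : D → E be a surjective complete lattice homomorphism between complete lattices. If D satisfies condition (★) — for every completely join-irreducible p, the complement of ↑p is the downset of a finite set of completely meet-irreducibles — then E satisfies (★) as well. -/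
section MaximalElements

variable {C : Type*} [CompleteLattice C] {q : C} {M : Finset C}

theorem compMeetIrred_of_maximal (hM : ∀ c, ¬ q ≤ c ↔ ∃ m ∈ M, c ≤ m) {m : C}
    (hm : Maximal (· ∈ M) m) : CompMeetIrred m := by
  intro S hS
  by_contra hmS
  -- Every `s ∈ S` lies strictly above `m`, so by maximality it cannot lie below any element of `M`.
  have hqS : ∀ s ∈ S, q ≤ s := by
    intro s hs
    by_contra hqs
    obtain ⟨m', hm', hsm'⟩ := (hM s).1 hqs
    have hms : m ≤ s := hS ▸ sInf_le hs
    have hsm : s ≤ m := hsm'.trans (hm.2 hm' (hms.trans hsm'))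
    exact hmS (le_antisymm hms hsm ▸ hs)
  exact (hM m).2 ⟨m, hm.1, le_rfl⟩ (hS ▸ le_sInf hqS)

theorem exists_compMeetIrred_finset_of_not_le_iff (hM : ∀ c, ¬ q ≤ c ↔ ∃ m ∈ M, c ≤ m) :
    ∃ M' : Finset C, (∀ m ∈ M', CompMeetIrred m) ∧ ∀ c, ¬ q ≤ c ↔ ∃ m ∈ M', c ≤ m := by
  classical
  refine ⟨M.filter (Maximal (· ∈ M)),
    fun m hm => compMeetIrred_of_maximal hM (Finset.mem_filter.1 hm).2, fun c => ?_⟩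
  rw [hM]
  constructor
  · rintro ⟨m, hm, hcm⟩
    obtain ⟨m', hmm', hmax⟩ := M.exists_le_maximal hm
    exact ⟨m', Finset.mem_filter.2 ⟨hmax.1, hmax⟩, hcm.trans hmm'⟩
  · rintro ⟨m, hm, hcm⟩
    exact ⟨m, (Finset.mem_filter.1 hm).1, hcm⟩

end MaximalElements

section LowerAdjoint

variable {α β : Type*} [CompleteLattice α] [CompleteLattice β] {l : α → β} {u : β → α}

theorem gc_sInf_setOf_le_of_map_sInf (hu : ∀ s, u (sInf s) = sInf (u '' s)) :
    GaloisConnection (fun a => sInf {b | a ≤ u b}) u := by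
  have hmono : Monotone u := fun b b' hbb' => by
    have hpair := hu {b, b'}
    rw [sInf_pair, inf_eq_left.2 hbb', Set.image_pair, sInf_pair] at hpair
    exact inf_eq_left.1 hpair.symm
  intro a b
  constructor
  · intro hab
    refine le_trans ?_ (hmono hab)
    rw [hu]
    exact le_sInf fun _ ⟨_, hb', hb'_eq⟩ => hb'_eq ▸ hb'
  · exact fun hab => sInf_le hab

theorem GaloisConnection.compJoinIrred_l (gc : GaloisConnection l u) (hul : ∀ a, u (l a) = a)
    (hu : ∀ s, u (sSup s) = sSup (u '' s)) {q : α} (hq : CompJoinIrred q) :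
    CompJoinIrred (l q) := by
  intro S hS
  obtain ⟨s, hs, rfl⟩ := hq _ (by rw [← hu, ← hS, hul])
  rwa [le_antisymm (gc.l_u_le s) (hS ▸ le_sSup hs)]

theorem GaloisConnection.not_le_iff_exists_le_image [DecidableEq α] (gc : GaloisConnection l u)
    (hul : ∀ a, u (l a) = a) {q : α} {M : Finset β} (hM : ∀ b, ¬ l q ≤ b ↔ ∃ m ∈ M, b ≤ m)
    (a : α) : ¬ q ≤ a ↔ ∃ m ∈ M.image u, a ≤ m :=
  calc ¬ q ≤ a ↔ ¬ l q ≤ l a := by rw [gc.le_iff_le, hul]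
    _ ↔ ∃ m ∈ M, l a ≤ m := hM _
    _ ↔ ∃ m ∈ M.image u, a ≤ m := by simp only [gc.le_iff_le, Finset.exists_mem_image]

end LowerAdjoint

/-- Condition (★) is preserved by surjective complete lattice homomorphisms. -/
theorem stmt_19 {D E : Type*} [CompleteLattice D] [CompleteLattice E]
    (h : D → E) (hsurj : Function.Surjective h)
    (hsSup : ∀ S : Set D, h (sSup S) = sSup (h '' S))
    (hsInf : ∀ S : Set D, h (sInf S) = sInf (h '' S))
    (hstar : ∀ p : D, CompJoinIrred p → ∃ M : Finset D,
      (∀ m ∈ M, CompMeetIrred m) ∧ ∀ c : D, ¬ p ≤ c ↔ ∃ m ∈ M, c ≤ m) :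
    ∀ q : E, CompJoinIrred q → ∃ M : Finset E,
      (∀ m ∈ M, CompMeetIrred m) ∧ ∀ c : E, ¬ q ≤ c ↔ ∃ m ∈ M, c ≤ m := by
  classical
  intro q hq
  have gc := gc_sInf_setOf_le_of_map_sInf hsInf
  have hhl : ∀ e, h (sInf {d | e ≤ h d}) = e := fun e => by
    obtain ⟨d, rfl⟩ := hsurj e
    exact gc.u_l_u_eq_u d
  obtain ⟨M, -, hM⟩ := hstar _ (gc.compJoinIrred_l hhl hsSup hq)
  exact exists_compMeetIrred_finset_of_not_le_iff (gc.not_le_iff_exists_le_image hhl hM)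
end
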